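/- If Φ¹, Φ² is a pair of orthogonal quantum Latin squares of dimension d₁ and Ψ¹, Ψ² is a pair of orthogonal quantum Latin squares of dimension d₂, then the arrays Φ and Ψ indexed by ([d₁]×[d₂])×([d₁]×[d₂]) with entries Φ_{(i,m),(j,n)} = Φ¹_{i,j} ⊗ Ψ¹_{m,n} and Ψ_{(i,m),(j,n)} = Φ²_{i,j} ⊗ Ψ²_{m,n} form a pair of orthogonal quantum Latin squares of dimension d₁d₂ on ℂ^{d₁} ⊗ ℂ^{d₂}. -/

import Mathlib

noncomputable section

/-- The inner product on a complex inner product space, as a function into `ℂ`. -/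
def ip {E : Type*} [NormedAddCommGroup E] [InnerProductSpace ℂ E] (x y : E) : ℂ :=
  inner ℂ x y

/-- Concrete tensor product `ℂ^a ⊗ ℂ^b ≃ ℂ^(a × b)` of two vectors:
`(u ⊗ v) (p, q) = u p * v q`. -/
def tens {a b : Type*} [Fintype a] [Fintype b] (u : EuclideanSpace ℂ a)
    (v : EuclideanSpace ℂ b) : EuclideanSpace ℂ (a × b) :=
  WithLp.toLp 2 (fun p : a × b => u p.1 * v p.2)

/-- A quantum Latin square over index set `ι` with values in the Hilbert space `E`:
an `ι × ι` array of vectors whose rows and columns are orthonormal bases. -/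
def IsQLSOn {ι : Type*} {E : Type*} [NormedAddCommGroup E] [InnerProductSpace ℂ E]
    (Φ : ι → ι → E) : Prop :=
  (∀ i, Orthonormal ℂ (Φ i)) ∧ (∀ j, Orthonormal ℂ (fun i => Φ i j))

/-- Orthogonality of two quantum Latin squares:
`⟨Φ_{i,j},Φ_{i',j'}⟩⟨Ψ_{i,j},Ψ_{i',j'}⟩ = δ_{ii'}δ_{jj'}`, i.e. the tensor products
`Φ_{i,j} ⊗ Ψ_{i,j}` form an orthonormal basis of `E ⊗ E`. -/
def OrthQLSOn {ι : Type*} [DecidableEq ι] {E : Type*} [NormedAddCommGroup E] [InnerProductSpace ℂ E]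
    (Φ Ψ : ι → ι → E) : Prop :=
  ∀ i j i' j', ip (Φ i j) (Φ i' j') * ip (Ψ i j) (Ψ i' j') =
    if i = i' ∧ j = j' then 1 else 0

/-! The inner product is multiplicative on tensors, `⟨u ⊗ v, u' ⊗ v'⟩ = ⟨u, u'⟩⟨v, v'⟩`.
Hence the orthonormality of rows and columns, and the orthogonality relation, of the product
squares factor into the same relations for the factors, and a product of Kronecker deltas is
the Kronecker delta of the pair. -/

section DirectProduct

variable {a b ι κ : Type*} [Fintype a] [Fintype b]

lemma ip_tens (u u' : EuclideanSpace ℂ a) (v v' : EuclideanSpace ℂ b) :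
    ip (tens u v) (tens u' v') = ip u u' * ip v v' := by
  simp only [ip, tens, PiLp.inner_apply, RCLike.inner_apply,
    Fintype.sum_prod_type, Finset.sum_mul_sum, map_mul]
  exact Finset.sum_congr rfl fun _ _ => Finset.sum_congr rfl fun _ _ => by ring

lemma Orthonormal.prod_tens {f : ι → EuclideanSpace ℂ a} {g : κ → EuclideanSpace ℂ b}
    (hf : Orthonormal ℂ f) (hg : Orthonormal ℂ g) :
    Orthonormal ℂ (fun p : ι × κ => tens (f p.1) (g p.2)) := by
  classical
  rw [orthonormal_iff_ite] at hf hg ⊢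
  intro p q
  rw [← ip, ip_tens, ip, ip, hf, hg, ite_zero_mul_ite_zero, mul_one]
  exact if_congr Prod.ext_iff.symm rfl rfl

lemma IsQLSOn.prod_tens {Φ : ι → ι → EuclideanSpace ℂ a} {Ψ : κ → κ → EuclideanSpace ℂ b}
    (hΦ : IsQLSOn Φ) (hΨ : IsQLSOn Ψ) :
    IsQLSOn (fun r c : ι × κ => tens (Φ r.1 c.1) (Ψ r.2 c.2)) :=
  ⟨fun r => (hΦ.1 r.1).prod_tens (hΨ.1 r.2), fun c =>
    Orthonormal.prod_tens (f := fun i => Φ i c.1) (g := fun m => Ψ m c.2) (hΦ.2 c.1) (hΨ.2 c.2)⟩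

lemma OrthQLSOn.prod_tens [DecidableEq ι] [DecidableEq κ]
    {Φ₁ Φ₂ : ι → ι → EuclideanSpace ℂ a} {Ψ₁ Ψ₂ : κ → κ → EuclideanSpace ℂ b}
    (hΦ : OrthQLSOn Φ₁ Φ₂) (hΨ : OrthQLSOn Ψ₁ Ψ₂) :
    OrthQLSOn (fun r c : ι × κ => tens (Φ₁ r.1 c.1) (Ψ₁ r.2 c.2))
      (fun r c : ι × κ => tens (Φ₂ r.1 c.1) (Ψ₂ r.2 c.2)) := by
  intro r c r' c'
  calc ip (tens (Φ₁ r.1 c.1) (Ψ₁ r.2 c.2)) (tens (Φ₁ r'.1 c'.1) (Ψ₁ r'.2 c'.2)) *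
        ip (tens (Φ₂ r.1 c.1) (Ψ₂ r.2 c.2)) (tens (Φ₂ r'.1 c'.1) (Ψ₂ r'.2 c'.2))
      = (ip (Φ₁ r.1 c.1) (Φ₁ r'.1 c'.1) * ip (Φ₂ r.1 c.1) (Φ₂ r'.1 c'.1)) *
        (ip (Ψ₁ r.2 c.2) (Ψ₁ r'.2 c'.2) * ip (Ψ₂ r.2 c.2) (Ψ₂ r'.2 c'.2)) := by
        rw [ip_tens, ip_tens]; ring
    _ = if r = r' ∧ c = c' then 1 else 0 := by
        rw [hΦ, hΨ, ite_zero_mul_ite_zero, mul_one]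
        exact if_congr (by simp only [Prod.ext_iff]; tauto) rfl rfl

end DirectProduct

/-- Direct product construction: if `Φ¹, Φ²` are orthogonal quantum Latin squares of
dimension `d₁` and `Ψ¹, Ψ²` are orthogonal quantum Latin squares of dimension `d₂`, then
the arrays with entries `Φ_{(i,m),(j,n)} = Φ¹_{i,j} ⊗ Ψ¹_{m,n}` and
`Ψ_{(i,m),(j,n)} = Φ²_{i,j} ⊗ Ψ²_{m,n}` form a pair of orthogonal quantum Latin squares
of dimension `d₁d₂` on `ℂ^{d₁} ⊗ ℂ^{d₂}`. -/
theorem direct_product_orth_qls {d₁ d₂ : ℕ}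
    (Φ₁ Φ₂ : Fin d₁ → Fin d₁ → EuclideanSpace ℂ (Fin d₁))
    (Ψ₁ Ψ₂ : Fin d₂ → Fin d₂ → EuclideanSpace ℂ (Fin d₂))
    (hΦ₁ : IsQLSOn Φ₁) (hΦ₂ : IsQLSOn Φ₂) (hΨ₁ : IsQLSOn Ψ₁) (hΨ₂ : IsQLSOn Ψ₂)
    (hΦ : OrthQLSOn Φ₁ Φ₂) (hΨ : OrthQLSOn Ψ₁ Ψ₂) :
    IsQLSOn (fun r c : Fin d₁ × Fin d₂ => tens (Φ₁ r.1 c.1) (Ψ₁ r.2 c.2)) ∧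
    IsQLSOn (fun r c : Fin d₁ × Fin d₂ => tens (Φ₂ r.1 c.1) (Ψ₂ r.2 c.2)) ∧
    OrthQLSOn (fun r c : Fin d₁ × Fin d₂ => tens (Φ₁ r.1 c.1) (Ψ₁ r.2 c.2))
      (fun r c : Fin d₁ × Fin d₂ => tens (Φ₂ r.1 c.1) (Ψ₂ r.2 c.2)) :=
  ⟨hΦ₁.prod_tens hΨ₁, hΦ₂.prod_tens hΨ₂, hΦ.prod_tens hΨ⟩
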